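/- arXiv:1710.05654 — 6 statements merged into one kernel-verified Lean document; each statement's English description precedes it below -/
import Mathlib

section
/- Let z ∈ ℝⁿ be sorted in ascending order with all zᵢ > 0, let θ > 0, fix k with 1 ≤ k < n, set b_k = z₁ + … + z_k and λ* = (θ b_k + √(θ² b_k² + 4k))/(2k). If θ z_k < λ* ≤ θ z_{k+1}, then the vector w* with w*ᵢ = max(0, λ* − θ zᵢ) satisfies ⟨w*, 1⟩ = 1/λ* and has exactly k strictly positive entries. -/
/-!
Below the threshold `k` the entries of `w` are `lam - θ * z i > 0`, beyond it they vanish, because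
`θ * z` is monotone and `lam` lies between `θ * z k` and `θ * z (k + 1)`. So `w` has support
`{1, …, k}` and total mass `k * lam - θ * b`, which is `1 / lam` because `lam` is the positive root
of `k * x ^ 2 - θ * b * x - 1`.
-/

open Finset

section PositiveRoot

variable {a c r : ℝ}

theorem pos_of_eq_positiveRoot (ha : 0 < a) (hr : r = (c + √(c ^ 2 + 4 * a)) / (2 * a)) :
    0 < r := by
  have hsqrt : |c| < √(c ^ 2 + 4 * a) := by
    rw [← Real.sqrt_sq_eq_abs]
    exact Real.sqrt_lt_sqrt (sq_nonneg c) (by linarith)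
  rw [hr]
  exact div_pos (by linarith [neg_abs_le c]) (by positivity)

theorem mul_sub_eq_one_div_of_eq_positiveRoot (ha : 0 < a)
    (hr : r = (c + √(c ^ 2 + 4 * a)) / (2 * a)) : a * r - c = 1 / r := by
  have hr0 : r ≠ 0 := (pos_of_eq_positiveRoot ha hr).ne'
  have hsqrt : √(c ^ 2 + 4 * a) = 2 * a * r - c := by
    rw [hr]; field_simp; ring
  have hquad : c ^ 2 + 4 * a = (2 * a * r - c) ^ 2 := by
    rw [← hsqrt, Real.sq_sqrt (by nlinarith [sq_nonneg c])]
  field_simp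
  nlinarith [hquad]

end PositiveRoot

section Threshold

variable {n k : ℕ} {f : ℕ → ℝ} {lam : ℝ}

theorem lt_of_mem_Icc_of_lt (hf : MonotoneOn f (Set.Icc 1 n)) (hkn : k ≤ n) (hlow : f k < lam)
    {i : ℕ} (hi : i ∈ Icc 1 k) : f i < lam := by
  rw [mem_Icc] at hi
  exact (hf ⟨hi.1, hi.2.trans hkn⟩ ⟨hi.1.trans hi.2, hkn⟩ hi.2).trans_lt hlow

theorem filter_pos_max_sub_eq_Icc (hf : MonotoneOn f (Set.Icc 1 n)) (hkn : k ≤ n)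
    (hlow : f k < lam) (hup : lam ≤ f (k + 1)) :
    (Icc 1 n).filter (fun i => 0 < max 0 (lam - f i)) = Icc 1 k := by
  ext i
  simp only [mem_filter, mem_Icc, lt_max_iff, lt_irrefl, false_or, sub_pos]
  constructor
  · rintro ⟨⟨h1, hin⟩, hlt⟩
    refine ⟨h1, ?_⟩
    by_contra! hki
    have : f (k + 1) ≤ f i := hf ⟨by omega, by omega⟩ ⟨h1, hin⟩ hki
    linarith
  · rintro ⟨h1, hik⟩
    exact ⟨⟨h1, hik.trans hkn⟩, lt_of_mem_Icc_of_lt hf hkn hlow (mem_Icc.2 ⟨h1, hik⟩)⟩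

theorem sum_max_sub_eq (hf : MonotoneOn f (Set.Icc 1 n)) (hkn : k ≤ n)
    (hlow : f k < lam) (hup : lam ≤ f (k + 1)) :
    ∑ i ∈ Icc 1 n, max 0 (lam - f i) = k * lam - ∑ i ∈ Icc 1 k, f i := by
  rw [← sum_filter_of_ne (p := fun i => 0 < max 0 (lam - f i))
      (fun i _ h => (le_max_left _ _).lt_of_ne' h),
    filter_pos_max_sub_eq_Icc hf hkn hlow hup]
  have hk : ∀ i ∈ Icc 1 k, max 0 (lam - f i) = lam - f i := fun i hi =>
    max_eq_right (sub_nonneg.2 (lt_of_mem_Icc_of_lt hf hkn hlow hi).le)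
  rw [sum_congr rfl hk, sum_sub_distrib, sum_const, Nat.card_Icc, nsmul_eq_mul,
    Nat.add_sub_cancel]

end Threshold

theorem stmt_3_general (n : ℕ) (z : ℕ → ℝ)
    (hsort : ∀ i, 1 ≤ i → i < n → z i ≤ z (i + 1))
    (θ : ℝ) (hθ : 0 < θ)
    (k : ℕ) (hk1 : 1 ≤ k) (hkn : k < n)
    (b lam : ℝ)
    (hb : b = ∑ i ∈ Finset.Icc 1 k, z i)
    (hlam : lam = (θ * b + Real.sqrt (θ ^ 2 * b ^ 2 + 4 * k)) / (2 * k))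
    (hlow : θ * z k < lam) (hup : lam ≤ θ * z (k + 1))
    (w : ℕ → ℝ) (hw : ∀ i, w i = max 0 (lam - θ * z i)) :
    (∑ i ∈ Finset.Icc 1 n, w i) = 1 / lam ∧
    ((Finset.Icc 1 n).filter (fun i => 0 < w i)).card = k := by
  have hz : MonotoneOn z (Set.Icc 1 n) :=
    monotoneOn_of_le_add_one Set.ordConnected_Icc fun i _ hi hi1 => hsort i hi.1 hi1.2
  have hmono : MonotoneOn (fun i => θ * z i) (Set.Icc 1 n) :=
    fun i hi j hj hij => mul_le_mul_of_nonneg_left (hz hi hj hij) hθ.le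
  rw [← mul_pow] at hlam
  have hk : (0 : ℝ) < k := by exact_mod_cast hk1
  simp_rw [hw]
  refine ⟨?_, ?_⟩
  · rw [sum_max_sub_eq hmono hkn.le hlow hup, ← mul_sum, ← hb]
    exact mul_sub_eq_one_div_of_eq_positiveRoot hk hlam
  · rw [filter_pos_max_sub_eq_Icc hmono hkn.le hlow hup, Nat.card_Icc, Nat.add_sub_cancel]

theorem stmt_3 (n : ℕ) (z : ℕ → ℝ)
    (hpos : ∀ i, 1 ≤ i → i ≤ n → 0 < z i)
    (hsort : ∀ i, 1 ≤ i → i < n → z i ≤ z (i + 1))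
    (θ : ℝ) (hθ : 0 < θ)
    (k : ℕ) (hk1 : 1 ≤ k) (hkn : k < n)
    (b lam : ℝ)
    (hb : b = ∑ i ∈ Finset.Icc 1 k, z i)
    (hlam : lam = (θ * b + Real.sqrt (θ ^ 2 * b ^ 2 + 4 * k)) / (2 * k))
    (hlow : θ * z k < lam) (hup : lam ≤ θ * z (k + 1))
    (w : ℕ → ℝ) (hw : ∀ i, w i = max 0 (lam - θ * z i)) :
    (∑ i ∈ Finset.Icc 1 n, w i) = 1 / lam ∧
    ((Finset.Icc 1 n).filter (fun i => 0 < w i)).card = k :=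
  stmt_3_general n z hsort θ hθ k hk1 hkn b lam hb hlam hlow hup w hw
end

section
/- Let z ∈ ℝⁿ with all zᵢ > 0 and θ > 0. Suppose w* ∈ ℝⁿ with w* ≥ 0 and ⟨w*,1⟩ > 0 satisfies the KKT conditions: there exists l ∈ ℝⁿ with l ≥ 0, lᵢ w*ᵢ = 0 for all i, and θ zᵢ − 1/⟨w*,1⟩ + w*ᵢ − lᵢ = 0 for all i. Then setting λ* = 1/⟨w*,1⟩, for every index i: w*ᵢ > 0 if and only if θ zᵢ < λ*, and in that case w*ᵢ = λ* − θ zᵢ. -/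
theorem stmt_7 (n : ℕ) (z w l : Fin n → ℝ) (θ : ℝ) (hθ : 0 < θ)
    (hz : ∀ i, 0 < z i)
    (hw : ∀ i, 0 ≤ w i) (hsum : 0 < ∑ i, w i)
    (hl : ∀ i, 0 ≤ l i) (hcomp : ∀ i, l i * w i = 0)
    (hstat : ∀ i, θ * z i - 1 / (∑ j, w j) + w i - l i = 0) :
    ∀ i, (0 < w i ↔ θ * z i < 1 / (∑ j, w j)) ∧
      (0 < w i → w i = 1 / (∑ j, w j) - θ * z i) := by
  intro i
  have key : 0 < w i → w i = 1 / (∑ j, w j) - θ * z i := by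
    intro hwi
    have hl0 : l i = 0 := by
      rcases mul_eq_zero.mp (hcomp i) with h | h
      · exact h
      · exact absurd h (ne_of_gt hwi)
    have := hstat i
    rw [hl0] at this
    linarith
  refine ⟨⟨fun hwi => ?_, fun h => ?_⟩, key⟩
  · have := key hwi; linarith
  · by_contra hwi
    have hw0 : w i = 0 := le_antisymm (not_lt.mp hwi) (hw i)
    have := hstat i
    rw [hw0] at this
    have : l i = θ * z i - 1 / (∑ j, w j) := by linarith
    linarith [hl i]
end

section
/- Let n ≥ 2 and let W be a symmetric n×n matrix with nonnegative entries, zero diagonal, and every row sum positive. Suppose for some pair i ≠ j with W_{ij} > 0 and some Z_{ij} ≥ 0, θ > 0, the optimality condition 2θZ_{ij} + 2W_{ij} − 1/(∑_{k≠i} W_{ik}) − 1/(∑_{k≠j} W_{kj}) = 0 holds. Then W_{ij} ≤ 1. -/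
theorem stmt_10 (n : ℕ) (hn : 2 ≤ n) (W : Matrix (Fin n) (Fin n) ℝ)
    (hsymm : W.IsSymm) (hnonneg : ∀ i j, 0 ≤ W i j) (hdiag : ∀ i, W i i = 0)
    (hdeg : ∀ i, 0 < ∑ j, W i j)
    (i j : Fin n) (hij : i ≠ j) (hWij : 0 < W i j)
    (Zij θ : ℝ) (hZ : 0 ≤ Zij) (hθ : 0 < θ)
    (hopt : 2 * θ * Zij + 2 * W i j
        - 1 / (∑ k ∈ Finset.univ \ {i}, W i k)
        - 1 / (∑ k ∈ Finset.univ \ {j}, W k j) = 0) :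
    W i j ≤ 1 := by
  set Si := ∑ k ∈ Finset.univ \ {i}, W i k with hSi
  set Sj := ∑ k ∈ Finset.univ \ {j}, W k j with hSj
  have hWle_i : W i j ≤ Si := by
    apply Finset.single_le_sum (f := fun k => W i k) (fun k _ => hnonneg i k)
    simp [Finset.mem_sdiff, hij.symm]
  have hWle_j : W i j ≤ Sj := by
    apply Finset.single_le_sum (f := fun k => W k j) (fun k _ => hnonneg k j)
    simp [Finset.mem_sdiff, hij]
  have hSipos : 0 < Si := lt_of_lt_of_le hWij hWle_i
  have hSjpos : 0 < Sj := lt_of_lt_of_le hWij hWle_j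
  have h1 : 2 * W i j ≤ 1 / Si + 1 / Sj := by nlinarith [mul_nonneg (mul_nonneg (le_of_lt hθ) hZ) (le_of_lt hθ), mul_nonneg hθ.le hZ]
  have h2 : 1 / Si ≤ 1 / W i j := one_div_le_one_div_of_le hWij hWle_i
  have h3 : 1 / Sj ≤ 1 / W i j := one_div_le_one_div_of_le hWij hWle_j
  have h4 : 2 * W i j ≤ 2 / W i j := by
    calc 2 * W i j ≤ 1 / Si + 1 / Sj := h1
    _ ≤ 1 / W i j + 1 / W i j := add_le_add h2 h3
    _ = 2 / W i j := by ring
  have h5 : 2 * W i j * W i j ≤ 2 := by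
    have := (le_div_iff₀ hWij).mp h4
    linarith
  nlinarith
end

section
/- Fix n ≥ 2, a symmetric nonnegative matrix Z with zero diagonal, and α, β > 0. Define F_{α,β}(W) = ∑_{ij} W_{ij}Z_{ij} − α ∑_i log(∑_j W_{ij}) + (β/2)∑_{ij} W_{ij}² on symmetric nonnegative matrices with zero diagonal and positive row sums. Then W minimizes F_{α,β} over this set if and only if W = √(α/β) · V where V minimizes F_{1,1} with Z replaced by Z/√(αβ). -/
/-!
Scaling by `c = √(α/β)` maps the feasible cone bijectively onto itself, and
`F_{α,β}(c • V) = α · F_{1,1}(V; Z/√(αβ)) - α n log c`: the constant `c` absorbs the ratio of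
the two weights and the factor `α` their size. Since `α > 0`, the minimizers correspond.
-/

/-- The feasible set: symmetric nonnegative matrices with zero diagonal and
positive row sums. -/
def GraphSet (n : ℕ) : Set (Matrix (Fin n) (Fin n) ℝ) :=
  {W | W.IsSymm ∧ (∀ i j, 0 ≤ W i j) ∧ (∀ i, W i i = 0) ∧ ∀ i, 0 < ∑ j, W i j}

/-- The log-degree graph learning objective with parameters α, β and distances Z. -/
noncomputable def logObj (n : ℕ) (α β : ℝ) (Z W : Matrix (Fin n) (Fin n) ℝ) : ℝ :=
  (∑ i, ∑ j, W i j * Z i j) - α * ∑ i, Real.log (∑ j, W i j)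
    + (β / 2) * ∑ i, ∑ j, (W i j) ^ 2

theorem exists_isMinOn_eq_iff_of_comp_eq {E : Type*} (e : E ≃ E) {S : Set E}
    (hS : ∀ x, e x ∈ S ↔ x ∈ S) {f g : E → ℝ} {a b : ℝ} (ha : 0 < a)
    (hfg : ∀ x ∈ S, f (e x) = a * g x + b) (W : E) :
    (W ∈ S ∧ IsMinOn f S W) ↔ ∃ V ∈ S, IsMinOn g S V ∧ W = e V := by
  constructor
  · rintro ⟨hW, hmin⟩
    have hV : e.symm W ∈ S := (hS _).1 (by simpa using hW)
    refine ⟨e.symm W, hV, fun U hU => ?_, (e.apply_symm_apply W).symm⟩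
    have hle : f (e (e.symm W)) ≤ f (e U) := by simpa using hmin ((hS U).2 hU)
    rw [hfg _ hV, hfg _ hU] at hle
    exact le_of_mul_le_mul_left (by linarith) ha
  · rintro ⟨V, hV, hmin, rfl⟩
    refine ⟨(hS V).2 hV, fun U hU => ?_⟩
    have hU' : e.symm U ∈ S := (hS _).1 (by simpa using hU)
    have hle : a * g V ≤ a * g (e.symm U) := mul_le_mul_of_nonneg_left (hmin hU') ha.le
    calc f (e V) = a * g V + b := hfg V hV
      _ ≤ a * g (e.symm U) + b := by linarith
      _ = f U := by rw [← hfg _ hU', e.apply_symm_apply]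

theorem smul_mem_graphSet {n : ℕ} {c : ℝ} (hc : 0 < c) {V : Matrix (Fin n) (Fin n) ℝ}
    (hV : V ∈ GraphSet n) : c • V ∈ GraphSet n := by
  obtain ⟨hsymm, hnonneg, hdiag, hrow⟩ := hV
  refine ⟨hsymm.smul c, fun i j => ?_, fun i => by simp [hdiag i], fun i => ?_⟩
  · simpa using mul_nonneg hc.le (hnonneg i j)
  · simpa [← Finset.mul_sum] using mul_pos hc (hrow i)

theorem smul_mem_graphSet_iff {n : ℕ} {c : ℝ} (hc : 0 < c) (V : Matrix (Fin n) (Fin n) ℝ) :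
    c • V ∈ GraphSet n ↔ V ∈ GraphSet n :=
  ⟨fun h => by simpa [hc.ne'] using smul_mem_graphSet (inv_pos.2 hc) h, smul_mem_graphSet hc⟩

theorem logObj_smul {n : ℕ} {c : ℝ} (hc : 0 < c) (α β : ℝ) (Z V : Matrix (Fin n) (Fin n) ℝ)
    (hV : ∀ i, 0 < ∑ j, V i j) :
    logObj n α β Z (c • V) = logObj n α (c ^ 2 * β) (c • Z) V - α * n * Real.log c := by
  have hlog : ∀ i, Real.log (∑ j, (c • V) i j) = Real.log c + Real.log (∑ j, V i j) := by
    intro i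
    simp only [Matrix.smul_apply, smul_eq_mul, ← Finset.mul_sum]
    exact Real.log_mul hc.ne' (hV i).ne'
  rw [logObj, logObj, Finset.sum_congr rfl fun i _ => hlog i, Finset.sum_add_distrib,
    Finset.sum_const, Finset.card_univ, Fintype.card_fin, nsmul_eq_mul]
  simp only [Matrix.smul_apply, smul_eq_mul, mul_pow, mul_add, Finset.mul_sum]
  ring_nf

theorem logObj_eq_mul_logObj_one {n : ℕ} {α : ℝ} (hα : α ≠ 0) (β : ℝ)
    (Z V : Matrix (Fin n) (Fin n) ℝ) :
    logObj n α β Z V = α * logObj n 1 (β / α) (α⁻¹ • Z) V := by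
  simp only [logObj, Matrix.smul_apply, smul_eq_mul, mul_left_comm (V _ _) α⁻¹,
    ← Finset.mul_sum]
  field_simp

theorem stmt_12_general (n : ℕ) (Z : Matrix (Fin n) (Fin n) ℝ)
    (α β : ℝ) (hα : 0 < α) (hβ : 0 < β) (W : Matrix (Fin n) (Fin n) ℝ) :
    (W ∈ GraphSet n ∧ ∀ V ∈ GraphSet n, logObj n α β Z W ≤ logObj n α β Z V) ↔
      ∃ V : Matrix (Fin n) (Fin n) ℝ, V ∈ GraphSet n ∧
        (∀ U ∈ GraphSet n,
          logObj n 1 1 (fun i j => Z i j / Real.sqrt (α * β)) V ≤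
            logObj n 1 1 (fun i j => Z i j / Real.sqrt (α * β)) U) ∧
        W = Real.sqrt (α / β) • V := by
  set c := Real.sqrt (α / β)
  have hc : 0 < c := Real.sqrt_pos.2 (div_pos hα hβ)
  have hweight : c ^ 2 * β / α = 1 := by
    rw [Real.sq_sqrt (div_pos hα hβ).le]
    field_simp
  have hdist : α⁻¹ • c • Z = fun i j => Z i j / Real.sqrt (α * β) := by
    have hcs : c * Real.sqrt (α * β) = α := by
      rw [← Real.sqrt_mul (div_pos hα hβ).le, show α / β * (α * β) = α * α by field_simp,
        Real.sqrt_mul_self hα.le]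
    have hs : 0 < Real.sqrt (α * β) := Real.sqrt_pos.2 (mul_pos hα hβ)
    ext i j
    simp only [Matrix.smul_apply, smul_eq_mul]
    field_simp
    linear_combination Z i j * hcs
  refine exists_isMinOn_eq_iff_of_comp_eq (LinearEquiv.smulOfNeZero ℝ _ c hc.ne').toEquiv
    (smul_mem_graphSet_iff hc) hα (b := -(α * n * Real.log c)) (fun V hV => ?_) W
  change logObj n α β Z (c • V) = _
  rw [logObj_smul hc _ _ _ _ hV.2.2.2, logObj_eq_mul_logObj_one hα.ne', hweight, hdist]
  ring

theorem stmt_12 (n : ℕ) (hn : 2 ≤ n) (Z : Matrix (Fin n) (Fin n) ℝ)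
    (hZsymm : Z.IsSymm) (hZnonneg : ∀ i j, 0 ≤ Z i j) (hZdiag : ∀ i, Z i i = 0)
    (α β : ℝ) (hα : 0 < α) (hβ : 0 < β) (W : Matrix (Fin n) (Fin n) ℝ) :
    (W ∈ GraphSet n ∧ ∀ V ∈ GraphSet n, logObj n α β Z W ≤ logObj n α β Z V) ↔
      ∃ V : Matrix (Fin n) (Fin n) ℝ, V ∈ GraphSet n ∧
        (∀ U ∈ GraphSet n,
          logObj n 1 1 (fun i j => Z i j / Real.sqrt (α * β)) V ≤
            logObj n 1 1 (fun i j => Z i j / Real.sqrt (α * β)) U) ∧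
        W = Real.sqrt (α / β) • V :=
  stmt_12_general n Z α β hα hβ W
end

section
/- Let z ∈ ℝⁿ with 0 < z₁ ≤ … ≤ zₙ and θ > 0. For k = 1, the condition θ²(k z_{k}² − b_k z_k) ≤ 1 is automatic (the left side is 0), so whenever θ > 1/√(z₂² − z₁z₂) (assuming z₁ < z₂), the minimizer of θwᵀz − log(wᵀ1) + ½‖w‖² over w ≥ 0 has exactly one nonzero entry, equal to λ* − θz₁ with λ* = (θz₁ + √(θ²z₁² + 4))/2. -/
/-!
The objective `F v = θ ⟪v, z⟫ - log (∑ v) + ½‖v‖²` is the sum of a linear term, a convex term and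
`½‖v‖²`, so wherever the KKT conditions hold at `u` one has `F u + ½‖v - u‖² ≤ F v` on the whole
feasible cone, and `u` is the unique minimizer. With `s = λ* - θ z₁` we have `λ* s = 1`, so the
gradient of `F` at `s e₁` vanishes in the first coordinate and equals `θ zᵢ - λ*` in the others;
this is nonnegative because `λ*` is the positive root of `x² - θ z₁ x - 1` while
`θ²(z₂² - z₁ z₂) > 1` puts `θ z₂` beyond it, and `zᵢ ≥ z₂` for `i ≥ 2`.
-/

open Finset Real

noncomputable def graphLearningObjective {ι : Type*} (K : Finset ι) (θ : ℝ) (z v : ι → ℝ) : ℝ :=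
  θ * ∑ i ∈ K, v i * z i - log (∑ i ∈ K, v i) + 1 / 2 * ∑ i ∈ K, v i ^ 2

section Objective

variable {ι : Type*} {K : Finset ι} {θ : ℝ} {z u v : ι → ℝ}

/-- `θ z - (∑ u)⁻¹ + u` is the gradient of the objective at `u`; the linear term and `-log` lie
above their tangents and `½‖·‖²` exceeds its tangent by exactly `½‖v - u‖²`. -/
theorem graphLearningObjective_add_half_sum_sq_le
    (hu : 0 < ∑ i ∈ K, u i)
    (hgrad : ∀ i ∈ K, 0 ≤ θ * z i - (∑ j ∈ K, u j)⁻¹ + u i)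
    (hslack : ∀ i ∈ K, (θ * z i - (∑ j ∈ K, u j)⁻¹ + u i) * u i = 0)
    (hv : ∀ i ∈ K, 0 ≤ v i) (hvt : 0 < ∑ i ∈ K, v i) :
    graphLearningObjective K θ z u + 1 / 2 * ∑ i ∈ K, (v i - u i) ^ 2 ≤
      graphLearningObjective K θ z v := by
  set S := ∑ j ∈ K, u j
  have hlog : log (∑ i ∈ K, v i) - log S ≤ S⁻¹ * ∑ i ∈ K, (v i - u i) := by
    have := log_le_sub_one_of_pos (div_pos hvt hu)
    rw [log_div hvt.ne' hu.ne'] at this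
    rwa [sum_sub_distrib, mul_sub, inv_mul_cancel₀ hu.ne', ← div_eq_inv_mul]
  have hfirst : 0 ≤ ∑ i ∈ K, (θ * z i - S⁻¹ + u i) * (v i - u i) :=
    sum_nonneg fun i hi => by
      rw [mul_sub, hslack i hi, sub_zero]
      exact mul_nonneg (hgrad i hi) (hv i hi)
  have hexpand : ∑ i ∈ K, (θ * z i - S⁻¹ + u i) * (v i - u i) =
      θ * ∑ i ∈ K, v i * z i - θ * ∑ i ∈ K, u i * z i - S⁻¹ * ∑ i ∈ K, (v i - u i)
        + (1 / 2 * ∑ i ∈ K, v i ^ 2 - 1 / 2 * ∑ i ∈ K, u i ^ 2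
          - 1 / 2 * ∑ i ∈ K, (v i - u i) ^ 2) := by
    simp only [mul_sum, ← sum_sub_distrib, ← sum_add_distrib]
    exact sum_congr rfl fun i _ => by ring
  unfold graphLearningObjective
  linarith

theorem eqOn_of_graphLearningObjective_le
    (hu : 0 < ∑ i ∈ K, u i)
    (hgrad : ∀ i ∈ K, 0 ≤ θ * z i - (∑ j ∈ K, u j)⁻¹ + u i)
    (hslack : ∀ i ∈ K, (θ * z i - (∑ j ∈ K, u j)⁻¹ + u i) * u i = 0)
    (hv : ∀ i ∈ K, 0 ≤ v i) (hvt : 0 < ∑ i ∈ K, v i)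
    (hmin : graphLearningObjective K θ z v ≤ graphLearningObjective K θ z u) :
    ∀ i ∈ K, v i = u i := by
  have hgrowth := graphLearningObjective_add_half_sum_sq_le hu hgrad hslack hv hvt
  have hzero : ∑ i ∈ K, (v i - u i) ^ 2 = 0 :=
    le_antisymm (by linarith) (sum_nonneg fun i _ => sq_nonneg _)
  intro i hi
  have := (sum_eq_zero_iff_of_nonneg fun i _ => sq_nonneg (v i - u i)).1 hzero i hi
  exact sub_eq_zero.1 (pow_eq_zero_iff two_ne_zero |>.1 this)

/-- The KKT conditions at `s • e i₀` read `θ z i₀ = s⁻¹ - s` and `s⁻¹ ≤ θ z i` elsewhere. -/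
theorem eqOn_single_of_graphLearningObjective_le [DecidableEq ι] {i₀ : ι} {s : ℝ}
    (hi₀ : i₀ ∈ K) (hs : 0 < s) (hi₀grad : θ * z i₀ = s⁻¹ - s)
    (hgrad : ∀ i ∈ K, i ≠ i₀ → s⁻¹ ≤ θ * z i)
    (hv : ∀ i ∈ K, 0 ≤ v i) (hvt : 0 < ∑ i ∈ K, v i)
    (hmin : graphLearningObjective K θ z v ≤
      graphLearningObjective K θ z (Pi.single i₀ s : ι → ℝ)) :
    ∀ i ∈ K, v i = (Pi.single i₀ s : ι → ℝ) i := by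
  have hsum : ∑ j ∈ K, (Pi.single i₀ s : ι → ℝ) j = s := by rw [sum_pi_single', if_pos hi₀]
  refine eqOn_of_graphLearningObjective_le (by rwa [hsum]) (fun i hi => ?_) (fun i hi => ?_)
    hv hvt hmin <;> rw [hsum] <;> rcases eq_or_ne i i₀ with rfl | hne
  · simp [hi₀grad]
  · simpa [hne] using hgrad i hi hne
  · simp [hi₀grad]
  · simp [hne]

end Objective

theorem filter_ne_zero_eq_singleton_of_eqOn_single {ι M : Type*} [DecidableEq ι] [Zero M]
    [DecidableEq M] {K : Finset ι} {i₀ : ι} {a : M} {v : ι → M} (hi₀ : i₀ ∈ K) (ha : a ≠ 0)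
    (hv : ∀ i ∈ K, v i = (Pi.single i₀ a : ι → M) i) :
    K.filter (fun i => v i ≠ 0) = {i₀} := by
  ext i
  simp only [mem_filter, mem_singleton]
  constructor
  · rintro ⟨hi, hne⟩
    by_contra h
    exact hne (by rw [hv i hi, Pi.single_eq_of_ne h])
  · rintro rfl
    exact ⟨hi₀, by rwa [hv i hi₀, Pi.single_eq_same]⟩

theorem mul_sub_eq_one_and_lt_of_eq_root {a l : ℝ} (hl : l = (a + √(a ^ 2 + 4)) / 2) :
    l * (l - a) = 1 ∧ a < l := by
  subst hl
  have hsq : √(a ^ 2 + 4) ^ 2 = a ^ 2 + 4 := sq_sqrt (by positivity)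
  have hlt : a < √(a ^ 2 + 4) := by nlinarith [sqrt_nonneg (a ^ 2 + 4)]
  constructor
  · linear_combination hsq / 4
  · linarith

theorem lt_of_mul_sub_eq_one_of_one_lt {a l x : ℝ} (hl : l * (l - a) = 1) (hal : a < l)
    (hax : a ≤ x) (hx : 1 < x * (x - a)) : l < x := by
  by_contra! hxl
  nlinarith [mul_nonneg (sub_nonneg.2 hxl) (by nlinarith : (0 : ℝ) ≤ l + x - a)]

theorem one_lt_mul_sq_of_one_div_sqrt_lt {E θ : ℝ} (hE : 0 < E) (hθ : 1 / √E < θ) :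
    1 < θ ^ 2 * E := by
  have hsqrt : 0 < √E := sqrt_pos.2 hE
  have h1 : 1 < θ * √E := by rwa [div_lt_iff₀ hsqrt] at hθ
  nlinarith [sq_sqrt hE.le]

theorem stmt_14 (n : ℕ) (hn : 2 ≤ n) (z : ℕ → ℝ)
    (hpos : ∀ i, 1 ≤ i → i ≤ n → 0 < z i)
    (hsort : ∀ i, 1 ≤ i → i < n → z i ≤ z (i + 1))
    (h12 : z 1 < z 2)
    (θ : ℝ) (hθ : 1 / Real.sqrt (z 2 ^ 2 - z 1 * z 2) < θ)
    (lam : ℝ) (hlam : lam = (θ * z 1 + Real.sqrt (θ ^ 2 * z 1 ^ 2 + 4)) / 2)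
    (w : ℕ → ℝ)
    (hwfeas : (∀ i ∈ Finset.Icc 1 n, 0 ≤ w i) ∧ 0 < ∑ i ∈ Finset.Icc 1 n, w i)
    (hwmin : ∀ v : ℕ → ℝ,
      (∀ i ∈ Finset.Icc 1 n, 0 ≤ v i) → 0 < ∑ i ∈ Finset.Icc 1 n, v i →
      θ * (∑ i ∈ Finset.Icc 1 n, w i * z i) - Real.log (∑ i ∈ Finset.Icc 1 n, w i)
          + (1 / 2) * ∑ i ∈ Finset.Icc 1 n, (w i) ^ 2 ≤
        θ * (∑ i ∈ Finset.Icc 1 n, v i * z i) - Real.log (∑ i ∈ Finset.Icc 1 n, v i)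
          + (1 / 2) * ∑ i ∈ Finset.Icc 1 n, (v i) ^ 2) :
    ((Finset.Icc 1 n).filter (fun i => w i ≠ 0)).card = 1 ∧
    w 1 = lam - θ * z 1 := by
  have h1 : 1 ∈ Icc 1 n := mem_Icc.2 ⟨le_rfl, by omega⟩
  have hθ0 : 0 ≤ θ := (by positivity : (0 : ℝ) ≤ 1 / √(z 2 ^ 2 - z 1 * z 2)).trans hθ.le
  obtain ⟨hroot, hlt⟩ :=
    mul_sub_eq_one_and_lt_of_eq_root (a := θ * z 1) (l := lam) (by rw [hlam, mul_pow])
  have hlam_lt : lam < θ * z 2 := by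
    refine lt_of_mul_sub_eq_one_of_one_lt hroot hlt (by gcongr) ?_
    have hz2 : 0 < z 2 := hpos 2 one_le_two hn
    linear_combination one_lt_mul_sq_of_one_div_sqrt_lt (by nlinarith) hθ
  have hmono : MonotoneOn z (Set.Icc 1 n) :=
    monotoneOn_of_le_succ Set.ordConnected_Icc fun a _ ha hsa => by
      rw [Order.succ_eq_add_one] at hsa ⊢
      exact hsort a ha.1 (by linarith [hsa.2])
  have hs : 0 < lam - θ * z 1 := sub_pos.2 hlt
  have hinv : (lam - θ * z 1)⁻¹ = lam := inv_eq_of_mul_eq_one_left hroot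
  have hgrad : ∀ i ∈ Icc 1 n, i ≠ 1 → (lam - θ * z 1)⁻¹ ≤ θ * z i := fun i hi hne => by
    rw [mem_Icc] at hi
    rw [hinv]
    exact hlam_lt.le.trans <|
      mul_le_mul_of_nonneg_left (hmono ⟨one_le_two, hn⟩ hi (by omega)) hθ0
  have hw := eqOn_single_of_graphLearningObjective_le h1 hs (by rw [hinv]; ring) hgrad
    hwfeas.1 hwfeas.2 (hwmin (Pi.single 1 (lam - θ * z 1))
      (fun i _ => by simp [Pi.single_apply, apply_ite, hs.le]) (by simp [h1, hs]))
  refine ⟨card_eq_one.2 ⟨1, filter_ne_zero_eq_singleton_of_eqOn_single h1 hs.ne' hw⟩, ?_⟩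
  simpa using hw 1 h1
end

section
/- Let z ∈ ℝⁿ with 0 < z₁ ≤ … ≤ zₙ and θ > 0, and let bᵢ = ∑_{j≤i} zⱼ and λᵢ = (θbᵢ + √(θ²bᵢ² + 4i))/(2i) for i = 1, …, n. If k ∈ {1,…,n−1} satisfies λ_k > θ z_k and λ_k ≤ θ z_{k+1}, then w = max(0, λ_k − θz) has exactly k nonzero entries and satisfies ⟨w,1⟩·λ_k = 1. -/
theorem stmt_18 (n : ℕ) (z : ℕ → ℝ)
    (hpos : ∀ i, 1 ≤ i → i ≤ n → 0 < z i)
    (hsort : ∀ i, 1 ≤ i → i < n → z i ≤ z (i + 1))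
    (θ : ℝ) (hθ : 0 < θ)
    (b lam : ℕ → ℝ)
    (hb : ∀ i, b i = ∑ j ∈ Finset.Icc 1 i, z j)
    (hlam : ∀ i, lam i = (θ * b i + Real.sqrt (θ ^ 2 * b i ^ 2 + 4 * i)) / (2 * i))
    (k : ℕ) (hk1 : 1 ≤ k) (hkn : k < n)
    (hlow : θ * z k < lam k) (hup : lam k ≤ θ * z (k + 1))
    (w : ℕ → ℝ) (hw : ∀ i, w i = max 0 (lam k - θ * z i)) :
    ((Finset.Icc 1 n).filter (fun i => w i ≠ 0)).card = k ∧
    (∑ i ∈ Finset.Icc 1 n, w i) * lam k = 1 := by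
  -- monotonicity of z on [1, n]
  have mono : ∀ j, j ≤ n → ∀ i, 1 ≤ i → i ≤ j → z i ≤ z j := by
    intro j
    induction j with
    | zero => intro _ i hi hij; omega
    | succ m ih =>
      intro hm i hi hij
      rcases Nat.lt_or_ge i (m+1) with h | h
      · have him : i ≤ m := by omega
        have h1m : 1 ≤ m := by omega
        have := ih (by omega) i hi him
        have := hsort m h1m (by omega)
        linarith
      · have : i = m + 1 := by omega
        subst this; exact le_refl _
  set L := lam k with hL
  -- quadratic identity
  have hknz : (0:ℝ) < (k:ℝ) := by exact_mod_cast hk1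
  have key : (k:ℝ) * L ^ 2 - θ * b k * L = 1 := by
    have harg : (0:ℝ) ≤ θ ^ 2 * b k ^ 2 + 4 * k := by positivity
    have hs2 : Real.sqrt (θ ^ 2 * b k ^ 2 + 4 * k) ^ 2 = θ ^ 2 * b k ^ 2 + 4 * k :=
      Real.sq_sqrt harg
    have hLdef : L * (2 * k) = θ * b k + Real.sqrt (θ ^ 2 * b k ^ 2 + 4 * k) := by
      rw [hL, hlam k]
      field_simp
    have hsq : (L * (2 * k) - θ * b k) ^ 2 = θ ^ 2 * b k ^ 2 + 4 * k := by
      rw [show L * (2 * k) - θ * b k = Real.sqrt (θ ^ 2 * b k ^ 2 + 4 * k) by linarith]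
      exact hs2
    have h4 : (k:ℝ) * ((k:ℝ) * L ^ 2 - θ * b k * L) = (k:ℝ) * 1 := by nlinarith [hsq]
    exact mul_left_cancel₀ hknz.ne' h4
  -- values of w
  have hwpos : ∀ i, 1 ≤ i → i ≤ k → w i = L - θ * z i ∧ 0 < w i := by
    intro i hi hik
    have hik' : z i ≤ z k := mono k (by omega) i hi hik
    have : θ * z i ≤ θ * z k := by nlinarith
    have hgt : 0 < L - θ * z i := by linarith
    rw [hw i, max_eq_right hgt.le]
    exact ⟨rfl, hgt⟩
  have hwzero : ∀ i, k + 1 ≤ i → i ≤ n → w i = 0 := by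
    intro i hi hin
    have : z (k+1) ≤ z i := mono i hin (k+1) (by omega) hi
    have : θ * z (k+1) ≤ θ * z i := by nlinarith
    have : L - θ * z i ≤ 0 := by linarith
    rw [hw i, max_eq_left this]
  constructor
  · have hfilter : (Finset.Icc 1 n).filter (fun i => w i ≠ 0) = Finset.Icc 1 k := by
      ext i
      simp only [Finset.mem_filter, Finset.mem_Icc]
      constructor
      · rintro ⟨⟨h1, h2⟩, hne⟩
        refine ⟨h1, ?_⟩
        by_contra h
        exact hne (hwzero i (by omega) h2)
      · rintro ⟨h1, h2⟩
        exact ⟨⟨h1, by omega⟩, (hwpos i h1 h2).2.ne'⟩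
    rw [hfilter, Nat.card_Icc]
    omega
  · have hsum : ∑ i ∈ Finset.Icc 1 n, w i = (k:ℝ) * L - θ * b k := by
      have hsplit : Finset.Icc 1 n = Finset.Icc 1 k ∪ Finset.Icc (k+1) n := by
        ext i; simp only [Finset.mem_union, Finset.mem_Icc]; omega
      rw [hsplit, Finset.sum_union (by
        apply Finset.disjoint_left.mpr
        intro a ha hb'
        simp only [Finset.mem_Icc] at ha hb'
        omega)]
      have h2 : ∑ i ∈ Finset.Icc (k+1) n, w i = 0 := by
        apply Finset.sum_eq_zero
        intro i hi
        simp only [Finset.mem_Icc] at hi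
        exact hwzero i hi.1 hi.2
      have h1 : ∑ i ∈ Finset.Icc 1 k, w i = (k:ℝ) * L - θ * b k := by
        have : ∑ i ∈ Finset.Icc 1 k, w i = ∑ i ∈ Finset.Icc 1 k, (L - θ * z i) := by
          apply Finset.sum_congr rfl
          intro i hi
          simp only [Finset.mem_Icc] at hi
          exact (hwpos i hi.1 hi.2).1
        rw [this, Finset.sum_sub_distrib, Finset.sum_const, Nat.card_Icc,
          ← Finset.mul_sum, ← hb k]
        simp only [Nat.add_sub_cancel, nsmul_eq_mul]
      rw [h1, h2]; ring
    rw [hsum]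
    nlinarith [key]
end
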